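/- arXiv:2110.10878 — 13 statements merged into one kernel-verified Lean document; each statement's English description precedes it below -/
import Mathlib

section
/- Let R be a nontrivial commutative ring with identity. Then R is a local ring (i.e. R has a unique maximal ideal) if and only if every proper ideal of R is a J-ideal. -/
/-- `Q` is a J-ideal: a proper ideal such that whenever `x * y ∈ Q` and `x` is not in the
Jacobson radical of the ring, then `y ∈ Q`. -/
def IsJIdeal {R : Type*} [CommRing R] (Q : Ideal R) : Prop :=
  Q ≠ ⊤ ∧ ∀ x y : R, x * y ∈ Q → x ∉ (⊥ : Ideal R).jacobson → y ∈ Q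

/-- A nontrivial commutative ring `R` is local (has a unique maximal ideal) iff every proper
ideal of `R` is a J-ideal. -/
theorem local_iff_every_proper_ideal_isJIdeal {R : Type*} [CommRing R] [Nontrivial R] :
    (∃! M : Ideal R, M.IsMaximal) ↔ ∀ Q : Ideal R, Q ≠ ⊤ → IsJIdeal Q := by
  constructor
  · rintro ⟨M, hM, huniq⟩ Q hQ
    refine ⟨hQ, fun x y hxy hx => ?_⟩
    have hxu : IsUnit x := by
      by_contra hu
      apply hx
      rw [Ideal.jacobson, Ideal.mem_sInf]
      rintro J ⟨-, hJ⟩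
      have hJM : J = M := huniq J hJ
      subst hJM
      have hspan : Ideal.span {x} ≠ ⊤ := by
        simpa [Ideal.span_singleton_eq_top] using hu
      obtain ⟨N, hN, hle⟩ := Ideal.exists_le_maximal _ hspan
      have : N = J := huniq N hN
      subst this
      exact hle (Ideal.mem_span_singleton_self x)
    obtain ⟨u, rfl⟩ := hxu
    have := Q.mul_mem_left (↑u⁻¹) hxy
    simpa [← mul_assoc] using this
  · intro h
    have key : ∀ x : R, ¬IsUnit x → x ∈ (⊥ : Ideal R).jacobson := by
      intro x hx
      by_contra hxJ
      have hQ : Ideal.span {x} ≠ ⊤ := by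
        simpa [Ideal.span_singleton_eq_top] using hx
      obtain ⟨-, h2⟩ := h _ hQ
      have h1 : (1 : R) ∈ Ideal.span {x} :=
        h2 x 1 (by simpa using Ideal.mem_span_singleton_self x) hxJ
      exact hQ ((Ideal.eq_top_iff_one _).mpr h1)
    obtain ⟨M, hM⟩ := Ideal.exists_maximal R
    refine ⟨M, hM, fun N hN => ?_⟩
    have hNM : N ≤ M := by
      intro a ha
      have haJ : a ∈ (⊥ : Ideal R).jacobson :=
        key a (fun hu => hN.ne_top (Ideal.eq_top_of_isUnit_mem _ ha hu))
      rw [Ideal.jacobson, Ideal.mem_sInf] at haJ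
      exact haJ ⟨bot_le, hM⟩
    exact hN.eq_of_le hM.ne_top hNM
end

section
/- Let R be a commutative ring with identity and let Q be a proper ideal of R. The following are equivalent: (1) Q is a J-ideal of R; (2) for every x ∈ R with x ∉ J(R), the colon ideal (Q : x) = {y ∈ R : x*y ∈ Q} equals Q; (3) for all ideals I₁, I₂ of R, if I₁·I₂ ⊆ Q and I₁ ⊄ J(R), then I₂ ⊆ Q. -/
/-- For a proper ideal `Q`, the following are equivalent:
(1) `Q` is a J-ideal;
(2) for every `x ∉ J(R)`, the colon ideal `(Q : x) = {y | x * y ∈ Q}` equals `Q`;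
(3) for all ideals `I₁ I₂`, if `I₁ * I₂ ⊆ Q` and `I₁ ⊄ J(R)` then `I₂ ⊆ Q`. -/
theorem isJIdeal_tfae {R : Type*} [CommRing R] (Q : Ideal R) (hQ : Q ≠ ⊤) :
    List.TFAE
      [ IsJIdeal Q,
        ∀ x : R, x ∉ (⊥ : Ideal R).jacobson → {y : R | x * y ∈ Q} = (Q : Set R),
        ∀ I₁ I₂ : Ideal R, I₁ * I₂ ≤ Q → ¬ I₁ ≤ (⊥ : Ideal R).jacobson → I₂ ≤ Q ] := by
  tfae_have 1 → 2 := by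
    rintro ⟨-, h⟩ x hx
    ext y
    constructor
    · exact fun hy => h x y hy hx
    · exact fun hy => Q.mul_mem_left x hy
  tfae_have 2 → 3 := by
    intro h I₁ I₂ hmul hI₁
    obtain ⟨x, hxI, hxJ⟩ := Set.not_subset.1 fun hs => hI₁ fun a ha => hs ha
    intro y hy
    have : y ∈ {y : R | x * y ∈ Q} := hmul (Ideal.mul_mem_mul hxI hy)
    rwa [h x hxJ] at this
  tfae_have 3 → 1 := by
    intro h
    refine ⟨hQ, fun x y hxy hx => ?_⟩
    have := h (Ideal.span {x}) (Ideal.span {y}) ?_ ?_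
    · exact this (Ideal.subset_span rfl)
    · rw [Ideal.span_singleton_mul_span_singleton]
      exact Ideal.span_le.2 (Set.singleton_subset_iff.2 hxy)
    · exact fun hs => hx (hs (Ideal.subset_span rfl))
  tfae_finish
end

section
/- Let R be a commutative ring with identity, let Q be a J-ideal of R, and let S be a nonempty subset of R with S ⊄ Q. Then the set U_S = {x ∈ R : x*s ∈ Q for all s ∈ S} is a J-ideal of R (in particular it is a proper ideal). -/
/-- The ideal `U_S = {x ∈ R | x * s ∈ Q for all s ∈ S}`. -/
def US {R : Type*} [CommRing R] (Q : Ideal R) (S : Set R) : Ideal R where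
  carrier := {x : R | ∀ s ∈ S, x * s ∈ Q}
  zero_mem' := fun s _ => by simp
  add_mem' := fun {a b} ha hb s hs => by
    simpa [add_mul] using Q.add_mem (ha s hs) (hb s hs)
  smul_mem' := fun c {x} hx s hs => by
    simpa [smul_eq_mul, mul_assoc] using Q.mul_mem_left c (hx s hs)

/-- If `Q` is a J-ideal and `S` is a nonempty subset of `R` not contained in `Q`,
then `U_S = {x | x * s ∈ Q for all s ∈ S}` is a J-ideal. -/
theorem US_isJIdeal {R : Type*} [CommRing R] (Q : Ideal R) (S : Set R)
    (hS : S.Nonempty) (hSQ : ¬ S ⊆ (Q : Set R)) (hQ : IsJIdeal Q) :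
    IsJIdeal (US Q S) := by
  obtain ⟨s₀, hs₀S, hs₀Q⟩ := Set.not_subset.1 hSQ
  constructor
  · intro h
    have : (1 : R) ∈ US Q S := h ▸ Submodule.mem_top
    exact hs₀Q (by simpa using this s₀ hs₀S)
  · intro x y hxy hx s hs
    exact hQ.2 x (y * s) (by simpa [mul_assoc] using hxy s hs) hx
end

section
/- Let R be a commutative ring with identity and let Q be a J-ideal of R such that there is no J-ideal of R that contains Q properly. Then Q is a prime ideal of R. -/
/-- If `Q` is a J-ideal and no J-ideal contains `Q` properly, then `Q` is prime. -/
theorem isPrime_of_maximal_jIdeal {R : Type*} [CommRing R] (Q : Ideal R)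
    (hQ : IsJIdeal Q) (hmax : ∀ P : Ideal R, IsJIdeal P → ¬ Q < P) :
    Q.IsPrime := by
  obtain ⟨hne, hJ⟩ := hQ
  refine ⟨hne, ?_⟩
  intro x y hxy
  by_cases hx : x ∈ Q
  · exact Or.inl hx
  · right
    set I := Q.colon (Ideal.span {x}) with hI
    have hsub : Q ≤ I := fun r hr => Ideal.mem_colon_span_singleton.mpr (Ideal.mul_mem_right x Q hr)
    have hIJ : IsJIdeal I := by
      constructor
      · intro h
        have : (1 : R) ∈ I := h ▸ Submodule.mem_top
        rw [Ideal.mem_colon_span_singleton, one_mul] at this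
        exact hx this
      · intro a b hab ha
        rw [Ideal.mem_colon_span_singleton] at hab ⊢
        have : a * (b * x) ∈ Q := by rw [← mul_assoc]; exact hab
        exact hJ a (b * x) this ha
    have : I = Q := by
      by_contra hne'
      exact hmax I hIJ (lt_of_le_of_ne hsub (Ne.symm hne'))
    have hy : y ∈ I := Ideal.mem_colon_span_singleton.mpr (by rwa [mul_comm])
    rwa [this] at hy
end

section
/- Let R be a commutative ring with identity and let Q be a proper ideal of R. If Q is a δ₁-J-ideal of R, where δ₁ is the expansion sending each ideal to its radical (i.e., for all x, y ∈ R, x*y ∈ Q implies x ∈ J(R) or y ∈ √Q), then the radical √Q is a J-ideal of R. -/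
/-- If `Q` is a proper ideal which is a `δ₁`-J-ideal, where `δ₁` is the radical expansion
(i.e. `x * y ∈ Q` implies `x ∈ J(R)` or `y ∈ √Q`), then `√Q` is a J-ideal. -/
theorem radical_isJIdeal_of_delta1_jIdeal {R : Type*} [CommRing R] (Q : Ideal R)
    (hQ : Q ≠ ⊤)
    (h : ∀ x y : R, x * y ∈ Q → x ∈ (⊥ : Ideal R).jacobson ∨ y ∈ Q.radical) :
    IsJIdeal Q.radical := by
  constructor
  · simpa [Ideal.radical_eq_top] using hQ
  · intro x y hxy hxJ
    obtain ⟨n, hn⟩ := hxy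
    rw [mul_pow] at hn
    rcases h (x ^ n) (y ^ n) hn with hx | hy
    · exact absurd (by
        rw [Ideal.jacobson, Ideal.mem_sInf] at hx ⊢
        intro M hM
        haveI := hM.2
        exact (hM.2.isPrime.mem_of_pow_mem n (hx hM))) hxJ
    · exact Ideal.radical_idem Q ▸ ⟨n, hy⟩
end

section
/- Let R be a commutative ring with identity, let δ and γ be two ideal expansions of R, and let Q be a proper ideal of R. If δ(Q) is a γ-J-ideal of R, then Q is a (γ∘δ)-J-ideal of R, i.e. for all x, y ∈ R, x*y ∈ Q implies x ∈ J(R) or y ∈ γ(δ(Q)). -/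
/-- `Q` is a δ-J-ideal for an ideal expansion `δ`: a proper ideal such that whenever
`x * y ∈ Q`, either `x` lies in the Jacobson radical or `y ∈ δ Q`. -/
def IsDeltaJIdeal {R : Type*} [CommRing R] (δ : Ideal R → Ideal R) (Q : Ideal R) : Prop :=
  Q ≠ ⊤ ∧ ∀ x y : R, x * y ∈ Q → x ∈ (⊥ : Ideal R).jacobson ∨ y ∈ δ Q

/-- If `δ` and `γ` are ideal expansions, `Q` is proper, and `δ Q` is a γ-J-ideal,
then `Q` is a `(γ ∘ δ)`-J-ideal. -/
theorem isCompJIdeal_of_isDeltaJIdeal {R : Type*} [CommRing R]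
    (δ γ : Ideal R → Ideal R)
    (hδ₁ : ∀ I : Ideal R, I ≤ δ I) (hδ₂ : ∀ I K : Ideal R, I ≤ K → δ I ≤ δ K)
    (hγ₁ : ∀ I : Ideal R, I ≤ γ I) (hγ₂ : ∀ I K : Ideal R, I ≤ K → γ I ≤ γ K)
    (Q : Ideal R) (hQ : Q ≠ ⊤) (h : IsDeltaJIdeal γ (δ Q)) :
    IsDeltaJIdeal (γ ∘ δ) Q := by
  exact ⟨hQ, fun x y hxy => h.2 x y (hδ₁ Q hxy)⟩
end

section
/- Let R be a commutative ring with identity, let δ be an ideal expansion of R, and let Q₁, Q₂, Q₃ be proper ideals of R with Q₁ ⊆ Q₂ ⊆ Q₃. If Q₃ is a δ-J-ideal of R and δ(Q₁) = δ(Q₃), then Q₂ is a δ-J-ideal of R. -/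
/-- If `Q₁ ⊆ Q₂ ⊆ Q₃` are proper ideals, `Q₃` is a δ-J-ideal and `δ Q₁ = δ Q₃`,
then `Q₂` is a δ-J-ideal. -/
theorem isDeltaJIdeal_of_sandwich {R : Type*} [CommRing R]
    (δ : Ideal R → Ideal R)
    (hδ₁ : ∀ I : Ideal R, I ≤ δ I) (hδ₂ : ∀ I K : Ideal R, I ≤ K → δ I ≤ δ K)
    (Q₁ Q₂ Q₃ : Ideal R) (h₁ : Q₁ ≠ ⊤) (h₂ : Q₂ ≠ ⊤) (h₃ : Q₃ ≠ ⊤)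
    (h₁₂ : Q₁ ≤ Q₂) (h₂₃ : Q₂ ≤ Q₃)
    (hQ₃ : IsDeltaJIdeal δ Q₃) (heq : δ Q₁ = δ Q₃) :
    IsDeltaJIdeal δ Q₂ := by
  have hδeq : δ Q₂ = δ Q₃ :=
    le_antisymm (hδ₂ _ _ h₂₃) (heq ▸ hδ₂ _ _ h₁₂)
  exact ⟨h₂, fun x y hxy => (hQ₃.2 x y (h₂₃ hxy)).imp id (fun h => hδeq ▸ h)⟩
end

section
/- Let R be a commutative ring with identity, let δ be an ideal expansion of R, and let Q be a δ-J-ideal of R such that √(δ(Q)) ⊆ δ(√Q). Then the radical √Q is a δ-J-ideal of R. -/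
lemma jacobson_pow_mem {R : Type*} [CommRing R] {x : R} {n : ℕ}
    (h : x ^ n ∈ (⊥ : Ideal R).jacobson) : x ∈ (⊥ : Ideal R).jacobson := by
  rw [Ideal.jacobson, Ideal.mem_sInf] at *
  intro J hJ
  have := h hJ
  rcases Nat.eq_zero_or_pos n with h0 | h0
  · exact absurd (Ideal.eq_top_of_isUnit_mem _ (by simpa [h0] using this) isUnit_one)
      hJ.2.ne_top
  · exact (hJ.2.isPrime.pow_mem_iff_mem n h0).mp this

/-- If `Q` is a δ-J-ideal and `√(δ Q) ⊆ δ(√Q)`, then `√Q` is a δ-J-ideal. -/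
theorem radical_isDeltaJIdeal {R : Type*} [CommRing R]
    (δ : Ideal R → Ideal R)
    (hδ₁ : ∀ I : Ideal R, I ≤ δ I) (hδ₂ : ∀ I K : Ideal R, I ≤ K → δ I ≤ δ K)
    (Q : Ideal R) (hQ : IsDeltaJIdeal δ Q)
    (hrad : (δ Q).radical ≤ δ Q.radical) :
    IsDeltaJIdeal δ Q.radical := by
  obtain ⟨hne, hJ⟩ := hQ
  refine ⟨fun h => hne (Ideal.radical_eq_top.mp h), fun x y hxy => ?_⟩
  obtain ⟨n, hn⟩ := hxy
  rw [mul_pow] at hn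
  rcases hJ _ _ hn with h | h
  · exact Or.inl (jacobson_pow_mem h)
  · exact Or.inr (hrad ⟨n, h⟩)
end

section
/- Let R be a commutative ring with identity, let δ be an ideal expansion of R, and let Q be a proper ideal of R. The following are equivalent: (1) Q is a δ-J-ideal of R; (2) for every ideal I of R and every x ∈ R, if a*x ∈ Q for all a ∈ I, then x ∈ J(R) or I ⊆ δ(Q); (3) for all ideals I₁, I₂ of R, if I₁·I₂ ⊆ Q and I₁ ⊄ J(R), then I₂ ⊆ δ(Q). -/
/-- For an ideal expansion `δ` and a proper ideal `Q`, the following are equivalent: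
(1) `Q` is a δ-J-ideal;
(2) for every ideal `I` and `x ∈ R`, if `a * x ∈ Q` for all `a ∈ I`, then `x ∈ J(R)` or
    `I ⊆ δ Q`;
(3) for all ideals `I₁ I₂`, if `I₁ * I₂ ⊆ Q` and `I₁ ⊄ J(R)`, then `I₂ ⊆ δ Q`. -/
theorem isDeltaJIdeal_tfae {R : Type*} [CommRing R]
    (δ : Ideal R → Ideal R)
    (hδ₁ : ∀ I : Ideal R, I ≤ δ I) (hδ₂ : ∀ I K : Ideal R, I ≤ K → δ I ≤ δ K)
    (Q : Ideal R) (hQ : Q ≠ ⊤) :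
    List.TFAE
      [ IsDeltaJIdeal δ Q,
        ∀ (I : Ideal R) (x : R), (∀ a ∈ I, a * x ∈ Q) →
          x ∈ (⊥ : Ideal R).jacobson ∨ I ≤ δ Q,
        ∀ I₁ I₂ : Ideal R, I₁ * I₂ ≤ Q → ¬ I₁ ≤ (⊥ : Ideal R).jacobson → I₂ ≤ δ Q ] := by
  tfae_have 1 → 3 := by
    rintro ⟨-, h⟩ I₁ I₂ hmul hI₁
    obtain ⟨a, haI, haJ⟩ := SetLike.not_le_iff_exists.mp hI₁
    intro y hy
    rcases h a y (hmul (Ideal.mul_mem_mul haI hy)) with h' | h'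
    · exact absurd h' haJ
    · exact h'
  tfae_have 3 → 2 := by
    intro h I x hIx
    by_cases hx : x ∈ (⊥ : Ideal R).jacobson
    · exact Or.inl hx
    · refine Or.inr (h (Ideal.span {x}) I ?_ ?_)
      · rw [Ideal.span_singleton_mul_le_iff]
        intro a ha
        rw [mul_comm]; exact hIx a ha
      · rw [Ideal.span_singleton_le_iff_mem]; exact hx
  tfae_have 2 → 1 := by
    intro h
    refine ⟨hQ, fun x y hxy => ?_⟩
    have key : ∀ a ∈ Ideal.span {y}, a * x ∈ Q := by
      intro a ha
      obtain ⟨c, rfl⟩ := Ideal.mem_span_singleton'.mp ha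
      have : c * (x * y) ∈ Q := Q.mul_mem_left c hxy
      simpa [mul_comm, mul_assoc, mul_left_comm] using this
    rcases h (Ideal.span {y}) x key with h' | h'
    · exact Or.inl h'
    · exact Or.inr (h' (Ideal.mem_span_singleton_self y))
  tfae_finish
end

section
/- Let R be a commutative ring with identity, let δ be an ideal expansion of R, and let Q be a proper ideal of R such that δ(Q) is also a proper ideal. Then Q is a δ-J-ideal of R if and only if Q ⊆ J(R) and for all x, y ∈ R with x*y ∈ Q, either x lies in the intersection of all maximal ideals of R containing Q, or y ∈ δ(Q). -/
/-- A proper ideal `Q` (with `δ Q` proper) is a δ-J-ideal iff `Q ⊆ J(R)` and for all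
`x * y ∈ Q`, either `x` lies in the intersection of all maximal ideals containing `Q`
(i.e. `Q.jacobson`), or `y ∈ δ Q`. -/
theorem isDeltaJIdeal_iff_le_jacobson {R : Type*} [CommRing R]
    (δ : Ideal R → Ideal R)
    (hδ₁ : ∀ I : Ideal R, I ≤ δ I) (hδ₂ : ∀ I K : Ideal R, I ≤ K → δ I ≤ δ K)
    (Q : Ideal R) (hQ : Q ≠ ⊤) (hδQ : δ Q ≠ ⊤) :
    IsDeltaJIdeal δ Q ↔
      Q ≤ (⊥ : Ideal R).jacobson ∧
        ∀ x y : R, x * y ∈ Q → x ∈ Q.jacobson ∨ y ∈ δ Q := by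
  constructor
  · rintro ⟨-, h⟩
    have hle : Q ≤ (⊥ : Ideal R).jacobson := by
      intro q hq
      rcases h q 1 (by simpa using hq) with h1 | h1
      · exact h1
      · exact absurd ((Ideal.eq_top_iff_one _).mpr h1) hδQ
    refine ⟨hle, fun x y hxy => ?_⟩
    rcases h x y hxy with h1 | h1
    · exact Or.inl (Ideal.jacobson_mono bot_le h1)
    · exact Or.inr h1
  · rintro ⟨hle, h⟩
    refine ⟨hQ, fun x y hxy => ?_⟩
    rcases h x y hxy with h1 | h1
    · left
      have : Q.jacobson ≤ ((⊥ : Ideal R).jacobson).jacobson :=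
        Ideal.jacobson_mono hle
      rw [Ideal.jacobson_idem] at this
      exact this h1
    · exact Or.inr h1
end

section
/- Let R be a commutative ring with identity, let δ be an ideal expansion of R, and let Q be a maximal ideal of R such that δ(Q) is a proper ideal. Then Q is a δ-J-ideal of R if and only if Q = J(R). -/
/-- A maximal ideal `Q` with `δ Q` proper is a δ-J-ideal iff `Q = J(R)`. -/
theorem maximal_isDeltaJIdeal_iff {R : Type*} [CommRing R]
    (δ : Ideal R → Ideal R)
    (hδ₁ : ∀ I : Ideal R, I ≤ δ I) (hδ₂ : ∀ I K : Ideal R, I ≤ K → δ I ≤ δ K)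
    (Q : Ideal R) (hQ : Q.IsMaximal) (hδQ : δ Q ≠ ⊤) :
    IsDeltaJIdeal δ Q ↔ Q = (⊥ : Ideal R).jacobson := by
  constructor
  · rintro ⟨-, h⟩
    apply le_antisymm
    · intro x hx
      rcases h x 1 (by simpa using hx) with hx' | h1
      · exact hx'
      · exact absurd ((Ideal.eq_top_iff_one _).2 h1) hδQ
    · exact sInf_le ⟨bot_le, hQ⟩
  · intro hEq
    refine ⟨hQ.ne_top, fun x y hxy => ?_⟩
    rcases hQ.isPrime.mem_or_mem hxy with hx | hy
    · exact Or.inl (hEq ▸ hx)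
    · exact Or.inr (hδ₁ Q hy)
end

section
/- Let R₁ and R₂ be commutative rings with identity, let h : R₁ → R₂ be a surjective ring homomorphism, and let δ and γ be ideal expansions of R₁ and R₂ respectively such that δ(h⁻¹(I₂)) = h⁻¹(γ(I₂)) for every ideal I₂ of R₂ (i.e., h is a δγ-homomorphism). If Q₁ is a δ-J-ideal of R₁ with ker(h) ⊆ Q₁, then the image ideal h(Q₁) is a γ-J-ideal of R₂. -/
/-- Let `h : R₁ →+* R₂` be a surjective homomorphism which is a δγ-homomorphism, i.e.
`δ (h⁻¹ I₂) = h⁻¹ (γ I₂)` for every ideal `I₂` of `R₂`. If `Q₁` is a δ-J-ideal of `R₁`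
containing `ker h`, then `h(Q₁)` is a γ-J-ideal of `R₂`. -/
theorem map_isDeltaJIdeal {R₁ R₂ : Type*} [CommRing R₁] [CommRing R₂]
    (h : R₁ →+* R₂) (hsurj : Function.Surjective h)
    (δ : Ideal R₁ → Ideal R₁) (γ : Ideal R₂ → Ideal R₂)
    (hδ₁ : ∀ I : Ideal R₁, I ≤ δ I) (hδ₂ : ∀ I K : Ideal R₁, I ≤ K → δ I ≤ δ K)
    (hγ₁ : ∀ I : Ideal R₂, I ≤ γ I) (hγ₂ : ∀ I K : Ideal R₂, I ≤ K → γ I ≤ γ K)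
    (hcompat : ∀ I₂ : Ideal R₂, δ (I₂.comap h) = (γ I₂).comap h)
    (Q₁ : Ideal R₁) (hQ₁ : IsDeltaJIdeal δ Q₁) (hker : RingHom.ker h ≤ Q₁) :
    IsDeltaJIdeal γ (Q₁.map h) := by
  obtain ⟨hne, hJ⟩ := hQ₁
  have hco : (Q₁.map h).comap h = Q₁ := by
    rw [Ideal.comap_map_of_surjective h hsurj, ← RingHom.ker_eq_comap_bot, sup_eq_left.mpr hker]
  constructor
  · intro htop
    apply hne
    rw [← hco, htop, Ideal.comap_top]
  · intro x y hxy
    obtain ⟨a, rfl⟩ := hsurj x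
    obtain ⟨b, rfl⟩ := hsurj y
    have hab : a * b ∈ Q₁ := by
      rw [← hco]; simpa using hxy
    rcases hJ a b hab with ha | hb
    · left
      rw [Ideal.mem_jacobson_bot] at ha ⊢
      intro z
      obtain ⟨c, rfl⟩ := hsurj z
      have := (ha c).map h
      simpa using this
    · right
      have : b ∈ δ ((Q₁.map h).comap h) := by rwa [hco]
      rw [hcompat] at this
      exact this
end

section
/- Let R be a commutative ring with identity, let δ be an ideal expansion of R, and let Q be a proper ideal of R. If δ(Q) is a (2,2)-absorbing J-ideal of R (in particular δ(Q) is proper), then Q is a (3,2)-absorbing δ-J-ideal of R, i.e., for all w, x, y, z ∈ R, w*x*y*z ∈ Q implies w*x*y ∈ J(R) or w*x*z ∈ δ(Q) or w*y*z ∈ δ(Q) or x*y*z ∈ δ(Q). -/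
/-- `P` is a (2,2)-absorbing J-ideal: a proper ideal such that `a * b * c ∈ P` implies
`a * b ∈ J(R)` or `a * c ∈ P` or `b * c ∈ P`. -/
def IsTwoAbsorbingJIdeal {R : Type*} [CommRing R] (P : Ideal R) : Prop :=
  P ≠ ⊤ ∧ ∀ a b c : R, a * b * c ∈ P →
    a * b ∈ (⊥ : Ideal R).jacobson ∨ a * c ∈ P ∨ b * c ∈ P

/-- If `δ Q` is a (2,2)-absorbing J-ideal, then `Q` is a (3,2)-absorbing δ-J-ideal:
`w * x * y * z ∈ Q` implies `w * x * y ∈ J(R)` or one of the other threefold products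
lies in `δ Q`. -/
theorem isThreeAbsorbingDeltaJIdeal {R : Type*} [CommRing R]
    (δ : Ideal R → Ideal R)
    (hδ₁ : ∀ I : Ideal R, I ≤ δ I) (hδ₂ : ∀ I K : Ideal R, I ≤ K → δ I ≤ δ K)
    (Q : Ideal R) (hQ : Q ≠ ⊤) (h : IsTwoAbsorbingJIdeal (δ Q)) :
    ∀ w x y z : R, w * x * y * z ∈ Q →
      w * x * y ∈ (⊥ : Ideal R).jacobson ∨ w * x * z ∈ δ Q ∨ w * y * z ∈ δ Q ∨
        x * y * z ∈ δ Q := by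
  intro w x y z hwxyz
  have hmem : (w * x) * y * z ∈ δ Q := hδ₁ Q hwxyz
  rcases h.2 (w * x) y z hmem with h1 | h2 | h3
  · exact Or.inl h1
  · exact Or.inr (Or.inl h2)
  · exact Or.inr (Or.inr (Or.inr (by
      have := Ideal.mul_mem_left (δ Q) x h3
      rwa [← mul_assoc] at this)))
end
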